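/- Completeness of the classical implicative-disjunctive propositional calculus: an implicative-disjunctive formula A is a theorem of the Hilbert system with axiom schemes Ax1–Ax6 and modus ponens if and only if A is a tautology under Boolean valuations. -/

import Mathlib

/-!
Soundness is a truth-table check of the axioms. For completeness, Kalmár's argument is run with
`p → G` in place of the missing `¬p`: if every atom `p` of `B` is assumed as `p` or as `p → G`
according to `v`, then `B ∨ G` is derivable when `v` makes `B` true, and `(B → Q) ∨ G` for every
`Q` when it makes `B` false. For `B = G = A` a tautology this yields `A ∨ A`, hence `A`, under every
such set of assumptions, and they are discharged one atom at a time since `p → A` and `(p → A) → A`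
together give `A`.
-/

inductive IDFrm where
  | atom : Nat → IDFrm
  | imp : IDFrm → IDFrm → IDFrm
  | or : IDFrm → IDFrm → IDFrm

inductive IDDeriv : Set IDFrm → IDFrm → Prop where
  | hyp {K A} : A ∈ K → IDDeriv K A
  | ax1 {K} (A B : IDFrm) : IDDeriv K (A.imp (B.imp A))
  | ax2 {K} (A B C : IDFrm) : IDDeriv K ((A.imp (B.imp C)).imp ((A.imp B).imp (A.imp C)))
  | ax3 {K} (A B : IDFrm) : IDDeriv K (((A.imp B).imp A).imp A)
  | ax4 {K} (A B : IDFrm) : IDDeriv K (A.imp (A.or B))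
  | ax5 {K} (A B : IDFrm) : IDDeriv K (A.imp (B.or A))
  | ax6 {K} (A B C : IDFrm) : IDDeriv K ((A.imp C).imp ((B.imp C).imp ((A.or B).imp C)))
  | mp {K A B} : IDDeriv K (A.imp B) → IDDeriv K A → IDDeriv K B

def IDFrm.eval (v : Nat → Bool) : IDFrm → Bool
  | .atom n => v n
  | .imp A B => !(A.eval v) || B.eval v
  | .or A B => A.eval v || B.eval v

namespace IDFrm

def atoms : IDFrm → Finset ℕ
  | .atom p => {p}
  | .imp A B => A.atoms ∪ B.atoms
  | .or A B => A.atoms ∪ B.atoms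

def literal (G : IDFrm) (v : ℕ → Bool) (p : ℕ) : IDFrm :=
  if v p then .atom p else (atom p).imp G

def literals (G : IDFrm) (v : ℕ → Bool) (s : Finset ℕ) : Set IDFrm :=
  literal G v '' s

end IDFrm

namespace IDDeriv

open IDFrm

variable {K K' : Set IDFrm} {A B C G : IDFrm}

theorem eval_eq_true (d : IDDeriv K A) (v : ℕ → Bool) (hK : ∀ B ∈ K, B.eval v = true) :
    A.eval v = true := by
  induction d with
  | hyp hA => exact hK _ hA
  | ax1 A B => simp only [eval]; cases A.eval v <;> cases B.eval v <;> rfl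
  | ax2 A B C => simp only [eval]; cases A.eval v <;> cases B.eval v <;> cases C.eval v <;> rfl
  | ax3 A B => simp only [eval]; cases A.eval v <;> cases B.eval v <;> rfl
  | ax4 A B => simp only [eval]; cases A.eval v <;> cases B.eval v <;> rfl
  | ax5 A B => simp only [eval]; cases A.eval v <;> cases B.eval v <;> rfl
  | ax6 A B C => simp only [eval]; cases A.eval v <;> cases B.eval v <;> cases C.eval v <;> rfl
  | mp _ _ ihAB ihA => simpa [eval, ihA] using ihAB

theorem mono (hKK' : K ⊆ K') (d : IDDeriv K A) : IDDeriv K' A := by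
  induction d with
  | hyp hA => exact hyp (hKK' hA)
  | ax1 => exact ax1 _ _
  | ax2 => exact ax2 _ _ _
  | ax3 => exact ax3 _ _
  | ax4 => exact ax4 _ _
  | ax5 => exact ax5 _ _
  | ax6 => exact ax6 _ _ _
  | mp _ _ ihAB ihA => exact mp ihAB ihA

theorem imp_self (A : IDFrm) : IDDeriv K (A.imp A) :=
  mp (mp (ax2 A (A.imp A) A) (ax1 _ _)) (ax1 _ _)

theorem deduction (d : IDDeriv (insert A K) B) : IDDeriv K (A.imp B) := by
  induction d with
  | hyp hB =>
    rcases Set.mem_insert_iff.1 hB with rfl | hB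
    · exact imp_self _
    · exact mp (ax1 _ _) (hyp hB)
  | ax1 => exact mp (ax1 _ _) (ax1 _ _)
  | ax2 => exact mp (ax1 _ _) (ax2 _ _ _)
  | ax3 => exact mp (ax1 _ _) (ax3 _ _)
  | ax4 => exact mp (ax1 _ _) (ax4 _ _)
  | ax5 => exact mp (ax1 _ _) (ax5 _ _)
  | ax6 => exact mp (ax1 _ _) (ax6 _ _ _)
  | mp _ _ ihAB ihA => exact mp (mp (ax2 _ _ _) ihAB) ihA

theorem of_imp (d : IDDeriv K (A.imp B)) : IDDeriv (insert A K) B :=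
  mp (mono (Set.subset_insert _ _) d) (hyp (Set.mem_insert _ _))

theorem imp_trans (hAB : IDDeriv K (A.imp B)) (hBC : IDDeriv K (B.imp C)) :
    IDDeriv K (A.imp C) :=
  deduction (mp (mono (Set.subset_insert _ _) hBC) (of_imp hAB))

theorem or_elim (h : IDDeriv K (A.or B)) (hA : IDDeriv K (A.imp C)) (hB : IDDeriv K (B.imp C)) :
    IDDeriv K C :=
  mp (mp (mp (ax6 A B C) hA) hB) h

/-- Peirce's law turns `(A ∨ (A → B)) → B` into `A ∨ (A → B)`, and that implication is immediate. -/
theorem or_imp_self (A B : IDFrm) : IDDeriv K (A.or (A.imp B)) := by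
  have hAB : IDDeriv (insert ((A.or (A.imp B)).imp B) K) (A.imp B) :=
    imp_trans (ax4 _ _) (hyp (Set.mem_insert _ _))
  exact mp (ax3 _ B) (deduction (mp (ax5 _ _) hAB))

theorem imp_imp_imp (A B C : IDFrm) : IDDeriv K (A.imp ((B.imp C).imp ((A.imp B).imp C))) := by
  refine deduction (deduction (deduction ?_))
  exact mp (hyp (by simp)) (mp (hyp (Set.mem_insert _ _)) (hyp (by simp)))

theorem mp_or (hAB : IDDeriv K ((A.imp B).or G)) (hA : IDDeriv K (A.or G)) :
    IDDeriv K (B.or G) := by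
  refine or_elim hAB (deduction ?_) (ax5 _ _)
  exact or_elim (mono (Set.subset_insert _ _) hA)
    (imp_trans (hyp (Set.mem_insert _ _)) (ax4 _ _)) (ax5 _ _)

theorem map_or (hAB : IDDeriv K (A.imp B)) (hA : IDDeriv K (A.or G)) : IDDeriv K (B.or G) :=
  mp_or (mp (ax4 _ _) hAB) hA

theorem kalmar (v : ℕ → Bool) (hK : ∀ p ∈ B.atoms, literal G v p ∈ K) :
    (B.eval v = true → IDDeriv K (B.or G)) ∧
      (B.eval v = false → ∀ Q, IDDeriv K ((B.imp Q).or G)) := by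
  induction B with
  | atom p =>
    have hp := hK p (Finset.mem_singleton_self p)
    simp only [eval]
    constructor
    · intro hv
      rw [literal, if_pos hv] at hp
      exact mp (ax4 _ _) (hyp hp)
    · intro hv Q
      rw [literal, if_neg (by simp [hv])] at hp
      exact or_elim (or_imp_self (atom p) Q) (imp_trans (hyp hp) (ax5 _ _)) (ax4 _ _)
  | or B C ihB ihC =>
    obtain ⟨hB, hB'⟩ := ihB fun p hp => hK p (Finset.mem_union_left _ hp)
    obtain ⟨hC, hC'⟩ := ihC fun p hp => hK p (Finset.mem_union_right _ hp)
    simp only [eval, Bool.or_eq_true, Bool.or_eq_false_iff]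
    constructor
    · rintro (hv | hv)
      · exact map_or (ax4 _ _) (hB hv)
      · exact map_or (ax5 _ _) (hC hv)
    · rintro ⟨hvB, hvC⟩ Q
      exact mp_or (map_or (ax6 B C Q) (hB' hvB Q)) (hC' hvC Q)
  | imp B C ihB ihC =>
    obtain ⟨hB, hB'⟩ := ihB fun p hp => hK p (Finset.mem_union_left _ hp)
    obtain ⟨hC, hC'⟩ := ihC fun p hp => hK p (Finset.mem_union_right _ hp)
    simp only [eval, Bool.or_eq_true, Bool.or_eq_false_iff, Bool.not_eq_true',
      Bool.not_eq_false']
    constructor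
    · rintro (hv | hv)
      · exact hB' hv C
      · exact map_or (ax1 _ _) (hC hv)
    · rintro ⟨hvB, hvC⟩ Q
      exact mp_or (map_or (imp_imp_imp B C Q) (hB hvB)) (hC' hvC Q)

theorem of_eval_eq_true_of_literal_mem {v : ℕ → Bool} (hv : A.eval v = true)
    (hK : ∀ p ∈ A.atoms, literal A v p ∈ K) : IDDeriv K A :=
  or_elim ((kalmar v hK).1 hv) (imp_self A) (imp_self A)

theorem of_forall_literals (s : Finset ℕ) (h : ∀ v, IDDeriv (literals A v s) A) :
    IDDeriv ∅ A := by
  induction s using Finset.induction_on with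
  | empty => simpa [literals] using h fun _ => true
  | insert p s hp ih =>
    refine ih fun v => ?_
    have hs (b : Bool) : literals A (Function.update v p b) s = literals A v s :=
      Set.image_congr fun q hq => by
        simp only [literal, Function.update_of_ne (ne_of_mem_of_not_mem hq hp)]
    have hinsert (b : Bool) : literals A (Function.update v p b) (insert p s) =
        insert (literal A (Function.update v p b) p) (literals A v s) := by
      rw [literals, Finset.coe_insert, Set.image_insert_eq, ← literals, hs]
    have hpos := h (Function.update v p true)
    have hneg := h (Function.update v p false)
    simp only [hinsert, literal, Function.update_self, if_true] at hpos hneg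
    exact mp (deduction hneg) (deduction hpos)

end IDDeriv

theorem stmt17 (A : IDFrm) :
    IDDeriv ∅ A ↔ ∀ v : Nat → Bool, A.eval v = true := by
  refine ⟨fun d v => d.eval_eq_true v (by simp), fun hA => ?_⟩
  refine IDDeriv.of_forall_literals A.atoms fun v => ?_
  exact IDDeriv.of_eval_eq_true_of_literal_mem (hA v) fun p hp => Set.mem_image_of_mem _ hp
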